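/- arXiv:2309.05778 — 3 statements merged into one kernel-verified Lean document; each statement's English description precedes it below -/
import Mathlib

section
/- Let A ∈ ℝ^{n×n}, X ∈ ℝ^{n×n} symmetric. If all eigenvalues of A lie in the open left half-plane and -AᵀX - XA is positive semidefinite, then X is positive semidefinite. -/
/-!
For `y t = exp (t • A) *ᵥ v`, the derivative of `t ↦ y t ⬝ᵥ X *ᵥ y t` is `-(y t ⬝ᵥ Q *ᵥ y t) ≤ 0`
with `Q = -AᵀX - XA`, so this function is antitone. Since `A` is Hurwitz, the spectrum of `exp A`,
which is contained in `exp '' spectrum A`, lies in the open unit disc, and Gelfand's formula turns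
spectral radius `< 1` into `exp (k • A) = exp A ^ k → 0`. Hence
`v ⬝ᵥ X *ᵥ v ≥ lim_k y k ⬝ᵥ X *ᵥ y k = 0`.
-/

open Matrix

open Filter Topology NormedSpace
open scoped ENNReal NNReal

theorem tendsto_pow_atTop_nhds_zero_of_spectralRadius_lt_one {A : Type*} [NormedRing A]
    [NormedAlgebra ℂ A] [CompleteSpace A] {a : A} (ha : spectralRadius ℂ a < 1) :
    Tendsto (a ^ ·) atTop (𝓝 0) := by
  obtain ⟨c, hac, hc1⟩ := exists_between ha
  have hbound : ∀ᶠ k : ℕ in atTop, (‖a ^ k‖₊ : ℝ≥0∞) ≤ c ^ k := by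
    have gelfand := spectrum.pow_nnnorm_pow_one_div_tendsto_nhds_spectralRadius a
    filter_upwards [gelfand.eventually_lt_const hac, eventually_gt_atTop 0] with k hk hk0
    rw [one_div, ENNReal.rpow_inv_lt_iff (by exact_mod_cast hk0), ENNReal.rpow_natCast] at hk
    exact hk.le
  have hnorm : Tendsto (fun k : ℕ => (‖a ^ k‖₊ : ℝ≥0∞)) atTop (𝓝 0) :=
    tendsto_of_tendsto_of_tendsto_of_le_of_le' tendsto_const_nhds
      (ENNReal.tendsto_pow_atTop_nhds_zero_of_lt_one hc1) (.of_forall fun _ => zero_le) hbound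
  rw [← ENNReal.coe_zero, ENNReal.tendsto_coe] at hnorm
  exact tendsto_zero_iff_norm_tendsto_zero.mpr (NNReal.tendsto_coe.mpr hnorm)

theorem HasDerivAt.dotProduct {𝕜 ι : Type*} [NontriviallyNormedField 𝕜] [Fintype ι]
    {f g : 𝕜 → ι → 𝕜} {f' g' : ι → 𝕜} {t : 𝕜} (hf : HasDerivAt f f' t)
    (hg : HasDerivAt g g' t) :
    HasDerivAt (fun s => f s ⬝ᵥ g s) (f' ⬝ᵥ g t + f t ⬝ᵥ g') t := by
  show HasDerivAt (fun s => ∑ i, f s i * g s i) (∑ i, f' i * g t i + ∑ i, f t i * g' i) t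
  rw [← Finset.sum_add_distrib]
  exact HasDerivAt.fun_sum fun i _ => (hasDerivAt_pi.1 hf i).mul (hasDerivAt_pi.1 hg i)

theorem HasDerivAt.const_mulVec {𝕜 ι κ : Type*} [NontriviallyNormedField 𝕜] [Fintype ι]
    {f : 𝕜 → ι → 𝕜} {f' : ι → 𝕜} {t : 𝕜} (M : Matrix κ ι 𝕜)
    (hf : HasDerivAt f f' t) : HasDerivAt (fun s => M *ᵥ f s) (M *ᵥ f') t :=
  hasDerivAt_pi.2 fun i => by
    have := (hasDerivAt_const t (M i)).dotProduct hf
    rw [zero_dotProduct, zero_add] at this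
    exact this

namespace Matrix

variable {m : Type*} [Fintype m] [DecidableEq m]

section Spectrum

open Polynomial

theorem exp_mem_adjoin_singleton {𝕜 : Type*} [RCLike 𝕜] (M : Matrix m m 𝕜) :
    exp M ∈ Algebra.adjoin 𝕜 {M} :=
  exp_mem (s := Algebra.adjoin 𝕜 {M})
    (Submodule.closed_of_finiteDimensional (Algebra.adjoin 𝕜 {M}).toSubmodule)
    (Algebra.self_mem_adjoin_singleton 𝕜 M)

theorem exists_aeval_eq_exp {𝕜 : Type*} [RCLike 𝕜] (M : Matrix m m 𝕜) :
    ∃ p : 𝕜[X], aeval M p = exp M := by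
  simpa [Algebra.adjoin_singleton_eq_range_aeval] using exp_mem_adjoin_singleton M

theorem aeval_mulVec_of_mulVec_eq_smul {R : Type*} [CommRing R] {M : Matrix m m R} {μ : R}
    {v : m → R} (h : M *ᵥ v = μ • v) (p : R[X]) : aeval M p *ᵥ v = p.eval μ • v := by
  have := Module.End.aeval_apply_of_mem_apply_eq_smul (f := M.toLinAlgEquiv') (p := p) h
  rwa [aeval_algHom_apply, toLinAlgEquiv'_apply] at this

open scoped Matrix.Norms.Operator in
theorem exp_mulVec_of_mulVec_eq_smul {𝕜 : Type*} [RCLike 𝕜] {M : Matrix m m 𝕜} {μ : 𝕜}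
    {v : m → 𝕜} (h : M *ᵥ v = μ • v) : exp M *ᵥ v = exp μ • v := by
  have hM := (exp_series_hasSum_exp' (𝕂 := 𝕜) M).map (mulVec.addMonoidHomLeft v)
    (continuous_id.matrix_mulVec continuous_const)
  have hμ := (exp_series_hasSum_exp' (𝕂 := 𝕜) μ).smul_const v
  refine hM.unique ?_
  convert hμ using 2 with k
  have hpow : (M ^ k) *ᵥ v = μ ^ k • v := by simpa using aeval_mulVec_of_mulVec_eq_smul h (X ^ k)
  simp [mulVec.addMonoidHomLeft, smul_mulVec, hpow, smul_smul]

theorem spectrum_exp_subset (M : Matrix m m ℂ) :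
    spectrum ℂ (exp M) ⊆ Complex.exp '' spectrum ℂ M := by
  nontriviality Matrix m m ℂ
  -- `exp M` is a polynomial `p` in `M`, and `p` agrees with `exp` on the eigenvalues of `M`.
  obtain ⟨p, hp⟩ := exists_aeval_eq_exp M
  open scoped Matrix.Norms.Operator in
  rw [← hp, spectrum.map_polynomial_aeval]
  rintro _ ⟨μ, hμ, rfl⟩
  refine ⟨μ, hμ, ?_⟩
  rw [← spectrum_toLin', ← Module.End.hasEigenvalue_iff_mem_spectrum] at hμ
  obtain ⟨v, hv⟩ := hμ.exists_hasEigenvector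
  have hvM : M *ᵥ v = μ • v := by simpa using hv.apply_eq_smul
  have h := aeval_mulVec_of_mulVec_eq_smul hvM p
  rw [hp, exp_mulVec_of_mulVec_eq_smul hvM, ← Complex.exp_eq_exp_ℂ] at h
  exact smul_left_injective ℂ hv.2 h

end Spectrum

open scoped Matrix.Norms.Operator in
theorem tendsto_exp_pow_atTop_nhds_zero {M : Matrix m m ℂ}
    (hM : ∀ μ ∈ spectrum ℂ M, μ.re < 0) : Tendsto (exp M ^ ·) atTop (𝓝 0) := by
  nontriviality Matrix m m ℂ
  refine tendsto_pow_atTop_nhds_zero_of_spectralRadius_lt_one ?_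
  simpa using spectrum.spectralRadius_lt_of_forall_lt (exp M) (r := 1) fun z hz => by
    obtain ⟨μ, hμ, rfl⟩ := spectrum_exp_subset M hz
    rw [← NNReal.coe_lt_coe, coe_nnnorm, Complex.norm_exp]
    simpa using hM μ hμ

open scoped Matrix.Norms.Operator in
theorem tendsto_exp_pow_atTop_nhds_zero_of_map_ofReal {A : Matrix m m ℝ}
    (hA : ∀ μ ∈ spectrum ℂ (A.map Complex.ofReal), μ.re < 0) :
    Tendsto (exp A ^ ·) atTop (𝓝 0) := by
  have hmap (k : ℕ) : (exp A ^ k).map Complex.ofReal = exp (A.map Complex.ofReal) ^ k := by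
    change Complex.ofRealHom.mapMatrix (exp A ^ k) = _
    rw [map_pow]
    exact congrArg (· ^ k) (map_exp (Complex.ofRealHom.mapMatrix (m := m))
      (continuous_id.matrix_map Complex.continuous_ofReal) A)
  have hre : Continuous fun C : Matrix m m ℂ => C.map Complex.re :=
    continuous_id.matrix_map Complex.continuous_re
  simpa [← hmap, Matrix.map_map, Function.comp_def] using
    (hre.tendsto 0).comp (tendsto_exp_pow_atTop_nhds_zero hA)

open scoped Matrix.Norms.Operator in
theorem hasDerivAt_exp_smul_mulVec {𝕜 : Type*} [RCLike 𝕜] (M : Matrix m m 𝕜) (v : m → 𝕜)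
    (t : 𝕜) : HasDerivAt (fun s : 𝕜 => exp (s • M) *ᵥ v) (M *ᵥ (exp (t • M) *ᵥ v)) t := by
  let L := LinearMap.toContinuousLinearMap
    ((mulVecBilin 𝕜 𝕜).flip v : Matrix m m 𝕜 →ₗ[𝕜] m → 𝕜)
  rw [mulVec_mulVec]
  exact L.hasFDerivAt.comp_hasDerivAt t (hasDerivAt_exp_smul_const' M t)

theorem antitone_dotProduct_mulVec_exp_smul {A X : Matrix m m ℝ}
    (h : (-(Aᵀ * X) - X * A).PosSemidef) (v : m → ℝ) :
    Antitone fun t : ℝ => (exp (t • A) *ᵥ v) ⬝ᵥ (X *ᵥ (exp (t • A) *ᵥ v)) := by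
  set y := fun t : ℝ => exp (t • A) *ᵥ v
  have hderiv (t : ℝ) : HasDerivAt (fun s => y s ⬝ᵥ (X *ᵥ y s))
      ((A *ᵥ y t) ⬝ᵥ (X *ᵥ y t) + y t ⬝ᵥ (X *ᵥ (A *ᵥ y t))) t :=
    have hy := hasDerivAt_exp_smul_mulVec A v t
    hy.dotProduct (hy.const_mulVec X)
  refine antitone_of_hasDerivAt_nonpos hderiv fun t => ?_
  have hQ : 0 ≤ y t ⬝ᵥ ((-(Aᵀ * X) - X * A) *ᵥ y t) := by
    simpa using h.dotProduct_mulVec_nonneg (y t)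
  have hderiv_eq : (A *ᵥ y t) ⬝ᵥ (X *ᵥ y t) + y t ⬝ᵥ (X *ᵥ (A *ᵥ y t)) =
      -(y t ⬝ᵥ ((-(Aᵀ * X) - X * A) *ᵥ y t)) := by
    simp [sub_mulVec, neg_mulVec, dotProduct_sub, ← mulVec_mulVec, dotProduct_mulVec,
      vecMul_transpose, add_comm]
  rw [Pi.zero_apply]
  linarith

end Matrix

/-- If `A` is Hurwitz (all eigenvalues in the open left half-plane), `X` is symmetric, and
`-AᵀX - XA` is positive semidefinite, then `X` is positive semidefinite. -/
theorem stmt_0 {n : ℕ} (A X : Matrix (Fin n) (Fin n) ℝ)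
    (hA : ∀ μ ∈ spectrum ℂ (A.map (Complex.ofReal)), μ.re < 0)
    (hX : Xᵀ = X)
    (hPSD : (-(Aᵀ * X) - X * A).PosSemidef) :
    X.PosSemidef := by
  refine .of_dotProduct_mulVec_nonneg (by simpa [IsHermitian] using hX) fun v => ?_
  set q := fun t : ℝ => (exp (t • A) *ᵥ v) ⬝ᵥ (X *ᵥ (exp (t • A) *ᵥ v))
  have hq : Tendsto (fun k : ℕ => q k) atTop (𝓝 0) := by
    have hexp (k : ℕ) : exp ((k : ℝ) • A) = exp A ^ k := by
      rw [Nat.cast_smul_eq_nsmul, Matrix.exp_nsmul]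
    have hcont : Continuous fun B : Matrix (Fin n) (Fin n) ℝ => (B *ᵥ v) ⬝ᵥ (X *ᵥ (B *ᵥ v)) := by
      fun_prop
    simpa only [q, hexp, Function.comp_def, zero_mulVec, mulVec_zero, dotProduct_zero] using
      (hcont.tendsto 0).comp (Matrix.tendsto_exp_pow_atTop_nhds_zero_of_map_ofReal hA)
  simpa [q] using
    le_of_tendsto' hq fun k => Matrix.antitone_dotProduct_mulVec_exp_smul hPSD v k.cast_nonneg
end

section
/- Let (A,B,C,D) define a passive LTI system and let X be a symmetric positive definite solution of the KYP inequality, i.e., the block matrix [[-AᵀX - XA, Cᵀ - XB],[C - BᵀX, D + Dᵀ]] is positive semidefinite. Define J := (AX⁻¹ - X⁻ᵀAᵀ)/2, R := -(AX⁻¹ + X⁻ᵀAᵀ)/2, Q := X. Then (J - R)Q = A, J is skew-symmetric, and R is symmetric positive semidefinite. -/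
/-!
The first two claims are the splitting of `A X⁻¹` into its skew-symmetric part `J` and symmetric
part `-R`, using `(X⁻¹)ᵀ * Aᵀ = (A X⁻¹)ᵀ`. For the third, the upper-left block `-(AᵀX + XA)` of
the KYP matrix is positive semidefinite, and the congruence by the symmetric matrix `X⁻¹` turns it
into `-(A X⁻¹ + (A X⁻¹)ᵀ) = 2R`.
-/

open Matrix

namespace Matrix

variable {ι κ R : Type*}

theorem PosSemidef.of_fromBlocks [CommRing R] [PartialOrder R] [StarRing R]
    {A : Matrix ι ι R} {B : Matrix ι κ R} {C : Matrix κ ι R} {D : Matrix κ κ R}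
    (h : (fromBlocks A B C D).PosSemidef) : A.PosSemidef :=
  h.submatrix Sum.inl

theorem transpose_smul_sub_transpose [CommRing R] (c : R) (M : Matrix ι ι R) :
    (c • (M - Mᵀ))ᵀ = -(c • (M - Mᵀ)) := by
  rw [transpose_smul, transpose_sub, transpose_transpose, ← smul_neg, neg_sub]

theorem inv_mul_neg_lyapunov_mul_inv [Fintype ι] [DecidableEq ι] [CommRing R]
    {A X : Matrix ι ι R} (hX : IsUnit X.det) (hXs : Xᵀ = X) :
    X⁻¹ * (-(Aᵀ * X) - X * A) * X⁻¹ = -(A * X⁻¹ + (A * X⁻¹)ᵀ) := by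
  have hXinv : X⁻¹ᵀ = X⁻¹ := by rw [transpose_nonsing_inv, hXs]
  rw [transpose_mul, hXinv, Matrix.mul_sub, Matrix.sub_mul, Matrix.mul_neg, Matrix.neg_mul,
    Matrix.mul_assoc, Matrix.mul_assoc, nonsing_inv_mul_cancel_left _ _ hX,
    mul_nonsing_inv _ hX, Matrix.mul_one]
  abel

theorem PosSemidef.neg_symm_part_mul_inv [Fintype ι] [DecidableEq ι] {A X : Matrix ι ι ℝ}
    (hX : X.PosDef) (hA : (-(Aᵀ * X) - X * A).PosSemidef) :
    (-((1 / 2 : ℝ) • (A * X⁻¹ + (A * X⁻¹)ᵀ))).PosSemidef := by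
  have hXs : Xᵀ = X := by simpa using hX.isHermitian.eq
  have hdet : IsUnit X.det := (isUnit_iff_isUnit_det X).mp hX.isUnit
  have hcongr := hA.mul_mul_conjTranspose_same X⁻¹
  rw [hX.inv.isHermitian.eq, inv_mul_neg_lyapunov_mul_inv hdet hXs] at hcongr
  rw [← smul_neg]
  exact hcongr.smul (by norm_num)

end Matrix

/-- If `X` is a symmetric positive definite solution of the KYP inequality for `(A,B,C,D)`,
then with `J := Skew(A X⁻¹)`, `R := -Sym(A X⁻¹)`, `Q := X` we have `(J - R) Q = A`,
`J` is skew-symmetric and `R` is symmetric positive semidefinite. -/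
theorem stmt_1 {n m : ℕ}
    (A : Matrix (Fin n) (Fin n) ℝ) (B : Matrix (Fin n) (Fin m) ℝ)
    (C : Matrix (Fin m) (Fin n) ℝ) (D : Matrix (Fin m) (Fin m) ℝ)
    (X : Matrix (Fin n) (Fin n) ℝ) (hX : X.PosDef)
    (hKYP : (Matrix.fromBlocks (-(Aᵀ * X) - X * A) (Cᵀ - X * B)
        (C - Bᵀ * X) (D + Dᵀ)).PosSemidef) :
    (((1 : ℝ) / 2) • (A * X⁻¹ - X⁻¹ᵀ * Aᵀ) - (-(((1 : ℝ) / 2) • (A * X⁻¹ + X⁻¹ᵀ * Aᵀ)))) * X = A ∧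
    (((1 : ℝ) / 2) • (A * X⁻¹ - X⁻¹ᵀ * Aᵀ))ᵀ = -(((1 : ℝ) / 2) • (A * X⁻¹ - X⁻¹ᵀ * Aᵀ)) ∧
    (-(((1 : ℝ) / 2) • (A * X⁻¹ + X⁻¹ᵀ * Aᵀ))).PosSemidef := by
  simp only [← transpose_mul]
  refine ⟨?_, transpose_smul_sub_transpose _ _, hKYP.of_fromBlocks.neg_symm_part_mul_inv hX⟩
  have hsplit : ((1 : ℝ) / 2) • (A * X⁻¹ - (A * X⁻¹)ᵀ)
      - -(((1 : ℝ) / 2) • (A * X⁻¹ + (A * X⁻¹)ᵀ)) = A * X⁻¹ := by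
    module
  rw [hsplit, nonsing_inv_mul_cancel_right _ _ ((isUnit_iff_isUnit_det X).mp hX.isUnit)]
end

section
/- Let P, Q ∈ ℝ^{n×n} and P̂, Q̂ ∈ ℝ^{r×r} be symmetric positive semidefinite, Y ∈ ℝ^{n×r}. Define J(Q̂) = ¼tr(PQPQ) + ¼tr(P̂Q̂P̂Q̂) − ½tr(YᵀQYQ̂). If P̂ is positive definite, then J has a unique global minimizer Q̂* over the set of symmetric matrices Q̂, and it satisfies P̂Q̂*P̂ = YᵀQY, i.e. Q̂* = P̂⁻¹(YᵀQY)P̂⁻¹. -/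
open Matrix
open scoped MatrixOrder
set_option maxHeartbeats 1000000

lemma trace_transpose_mul_self_pos {r : ℕ} (A : Matrix (Fin r) (Fin r) ℝ) (hA : A ≠ 0) :
    0 < (Aᵀ * A).trace := by
  have htr : (Aᵀ * A).trace = ∑ i, ∑ j, (A j i) ^ 2 := by
    simp [Matrix.trace, Matrix.diag, Matrix.mul_apply, sq]
  rw [htr]
  have hnn : ∀ i ∈ Finset.univ, (0:ℝ) ≤ ∑ j, (A j i) ^ 2 := fun i _ =>
    Finset.sum_nonneg fun j _ => sq_nonneg _
  rcases lt_or_eq_of_le (Finset.sum_nonneg hnn) with h | h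
  · exact h
  · exfalso; apply hA
    ext j i
    have h1 := (Finset.sum_eq_zero_iff_of_nonneg hnn).mp h.symm i (Finset.mem_univ i)
    have h2 := (Finset.sum_eq_zero_iff_of_nonneg (fun j _ => sq_nonneg (A j i))).mp h1 j
      (Finset.mem_univ j)
    simpa using pow_eq_zero_iff (n := 2) (by norm_num) |>.mp h2

/-- The quadratic functional
`J(Q̂) = ¼tr(PQPQ) + ¼tr(P̂Q̂P̂Q̂) − ½tr(YᵀQYQ̂)` with `P̂ ≻ 0` has the unique global minimizer
`Q̂* = P̂⁻¹(YᵀQY)P̂⁻¹` over symmetric matrices, which satisfies `P̂Q̂*P̂ = YᵀQY`. -/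
theorem stmt_9 {n r : ℕ}
    (P Q : Matrix (Fin n) (Fin n) ℝ) (Phat : Matrix (Fin r) (Fin r) ℝ)
    (Y : Matrix (Fin n) (Fin r) ℝ)
    (hP : P.PosSemidef) (hQ : Q.PosSemidef) (hPhat : Phat.PosDef) :
    let J : Matrix (Fin r) (Fin r) ℝ → ℝ := fun Qhat =>
      (1 / 4) * (P * Q * P * Q).trace + (1 / 4) * (Phat * Qhat * Phat * Qhat).trace -
        (1 / 2) * (Yᵀ * Q * Y * Qhat).trace
    let Qstar : Matrix (Fin r) (Fin r) ℝ := Phat⁻¹ * (Yᵀ * Q * Y) * Phat⁻¹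
    Qstarᵀ = Qstar ∧ Phat * Qstar * Phat = Yᵀ * Q * Y ∧
      ∀ Qhat : Matrix (Fin r) (Fin r) ℝ, Qhatᵀ = Qhat → Qhat ≠ Qstar →
        J Qstar < J Qhat := by
  intro J Qstar
  have hdet : IsUnit Phat.det := isUnit_iff_ne_zero.mpr hPhat.det_pos.ne'
  have hPt : Phatᵀ = Phat := by
    have := hPhat.1.eq
    rwa [conjTranspose_eq_transpose_of_trivial] at this
  have hQt : Qᵀ = Q := by
    have := hQ.1.eq
    rwa [conjTranspose_eq_transpose_of_trivial] at this
  have hMt : (Yᵀ * Q * Y)ᵀ = Yᵀ * Q * Y := by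
    rw [transpose_mul, transpose_mul, transpose_transpose, hQt, Matrix.mul_assoc]
  have hPit : (Phat⁻¹)ᵀ = Phat⁻¹ := by rw [transpose_nonsing_inv, hPt]
  have hinv1 : Phat * Phat⁻¹ = 1 := mul_nonsing_inv _ hdet
  have hinv2 : Phat⁻¹ * Phat = 1 := nonsing_inv_mul _ hdet
  have hQst : Qstarᵀ = Qstar := by
    show (Phat⁻¹ * (Yᵀ * Q * Y) * Phat⁻¹)ᵀ = Phat⁻¹ * (Yᵀ * Q * Y) * Phat⁻¹
    rw [transpose_mul, transpose_mul, hPit, hMt]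
    noncomm_ring
  have heq : Phat * Qstar * Phat = Yᵀ * Q * Y := by
    show Phat * (Phat⁻¹ * (Yᵀ * Q * Y) * Phat⁻¹) * Phat = _
    rw [Matrix.mul_assoc, Matrix.mul_assoc, hinv2, Matrix.mul_one, ← Matrix.mul_assoc,
      ← Matrix.mul_assoc, hinv1, Matrix.one_mul]
  refine ⟨hQst, heq, ?_⟩
  intro Qhat hQh hne
  -- symmetric-trace swap lemma
  have swap : ∀ A B : Matrix (Fin r) (Fin r) ℝ, Aᵀ = A → Bᵀ = B →
      (Phat * A * Phat * B).trace = (Phat * B * Phat * A).trace := by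
    intro A B hA hB
    have := Matrix.trace_transpose (Phat * A * Phat * B)
    rw [transpose_mul, transpose_mul, transpose_mul, hA, hB, hPt] at this
    rw [← this, show B * (Phat * (A * Phat)) = B * Phat * A * Phat from by noncomm_ring,
      Matrix.trace_mul_comm, show Phat * (B * Phat * A) = Phat * B * Phat * A from by
        noncomm_ring]
  set D : Matrix (Fin r) (Fin r) ℝ := Qhat - Qstar with hD
  have hDt : Dᵀ = D := by rw [hD, transpose_sub, hQh, hQst]
  have hDne : D ≠ 0 := sub_ne_zero.mpr hne
  have hQhat : Qhat = Qstar + D := by rw [hD]; abel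
  -- the key expansion
  have key : J Qhat - J Qstar = (1/4) * (Phat * D * Phat * D).trace := by
    have cross : (Yᵀ * Q * Y * Qhat).trace = (Phat * Qstar * Phat * Qhat).trace := by
      rw [heq]
    have cross' : (Yᵀ * Q * Y * Qstar).trace = (Phat * Qstar * Phat * Qstar).trace := by
      rw [heq]
    have expand : (Phat * Qhat * Phat * Qhat).trace
        = (Phat * Qstar * Phat * Qstar).trace + 2 * (Phat * Qstar * Phat * D).trace
          + (Phat * D * Phat * D).trace := by
      rw [hQhat]
      have : Phat * (Qstar + D) * Phat * (Qstar + D)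
          = Phat * Qstar * Phat * Qstar + Phat * Qstar * Phat * D
            + Phat * D * Phat * Qstar + Phat * D * Phat * D := by
        noncomm_ring
      rw [this, trace_add, trace_add, trace_add,
        swap D Qstar hDt hQst]
      ring
    have crossD : (Phat * Qstar * Phat * Qhat).trace
        = (Phat * Qstar * Phat * Qstar).trace + (Phat * Qstar * Phat * D).trace := by
      rw [hQhat, Matrix.mul_add, trace_add]
    simp only [J, expand, cross, cross', crossD]
    ring
  -- positivity
  have hSps := hPhat.posSemidef
  set S := CFC.sqrt Phat with hS
  have hSS : S * S = Phat := CFC.sqrt_mul_sqrt_self Phat hSps.nonneg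
  have hSt : Sᵀ = S := by
    have := (CFC.sqrt_nonneg Phat).posSemidef.1.eq
    rwa [conjTranspose_eq_transpose_of_trivial] at this
  have hSdet : S.det ≠ 0 := by
    intro h
    have : Phat.det = 0 := by rw [← hSS, det_mul, h, mul_zero]
    exact hPhat.det_pos.ne' this
  have hSu : IsUnit S.det := isUnit_iff_ne_zero.mpr hSdet
  set A : Matrix (Fin r) (Fin r) ℝ := S * D * S with hA
  have hAt : Aᵀ = A := by rw [hA, transpose_mul, transpose_mul, hSt, hDt, Matrix.mul_assoc]
  have hAne : A ≠ 0 := by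
    intro h
    apply hDne
    have : S⁻¹ * A * S⁻¹ = D := by
      rw [hA, Matrix.mul_assoc, Matrix.mul_assoc, mul_nonsing_inv _ hSu, Matrix.mul_one,
        ← Matrix.mul_assoc, nonsing_inv_mul _ hSu, Matrix.one_mul]
    rw [← this, h, Matrix.mul_zero, Matrix.zero_mul]
  have htrA : (Phat * D * Phat * D).trace = (Aᵀ * A).trace := by
    have h1 : Phat * D * Phat * D = S * (S * D * S * (S * D)) := by
      rw [← hSS]; noncomm_ring
    have h2 : A * A = S * D * S * (S * D) * S := by rw [hA]; noncomm_ring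
    rw [hAt, h1, Matrix.trace_mul_comm, ← h2]
  have hpos : 0 < (Phat * D * Phat * D).trace := by
    rw [htrA]; exact trace_transpose_mul_self_pos A hAne
  have hd : 0 < J Qhat - J Qstar := by rw [key]; linarith
  linarith
end
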